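/- arXiv:2305.01721 — 2 statements merged into one kernel-verified Lean document; each statement's English description precedes it below -/
import Mathlib

section
/- Let k ≥ 2 and d ≥ 2 be integers. Then there is no polynomial p with the property that L_SR(S) ≤ p(|S|) for every reduced decision rule system S with k(S) = k and d(S) = d; that is, for every polynomial p there exists a reduced decision rule system S with k(S) = k, d(S) = d, and L_SR(S) > p(|S|). -/
/- Common formal framework for decision rule systems and decision trees /
   acyclic decision graphs, following Durdymyradov & Moshkov. -/

attribute [local instance] Classical.propDecidable

noncomputable section

namespace DRS

/-- A decision rule `(a_{i₁}=δ₁) ∧ ⋯ ∧ (a_{i_m}=δ_m) → σ`: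
`K` is the finite set of equations (attribute index, value), `rhs` is σ. -/
structure Rule where
  K : Finset (ℕ × ℕ)
  rhs : ℕ

/-- Well-formedness of a rule: the attributes on its left-hand side are pairwise different. -/
def Rule.WF (r : Rule) : Prop := ∀ p ∈ r.K, ∀ q ∈ r.K, p.1 = q.1 → p = q

/-- A(r): the set of attributes of a rule. -/
def Rule.attrs (r : Rule) : Finset ℕ := r.K.image Prod.fst

/-- The length m of a rule. -/
def Rule.len (r : Rule) : ℕ := r.K.card

/-- A(S) -/
def attrs (S : Finset Rule) : Finset ℕ := S.biUnion Rule.attrs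

/-- n(S) -/
def nPar (S : Finset Rule) : ℕ := (attrs S).card

/-- d(S): the maximum length of a rule of S. -/
def dPar (S : Finset Rule) : ℕ := S.sup Rule.len

/-- D(S): the set of right-hand sides. -/
def rhsSet (S : Finset Rule) : Finset ℕ := S.image Rule.rhs

/-- V_S(a_i) -/
def VS (S : Finset Rule) (i : ℕ) : Finset ℕ :=
  ((S.biUnion Rule.K).filter fun p => p.1 = i).image Prod.snd

/-- k(S) -/
def kPar (S : Finset Rule) : ℕ := (attrs S).sup fun i => (VS S i).card

/-- Attribute values in trees are `Option ℕ`; `none` plays the role of the special value `*`.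
`allowed S false i` is (the lift of) `V_S(a_i)`, and `allowed S true i` is `EV_S(a_i)`. -/
def allowed (S : Finset Rule) (ext : Bool) (i : ℕ) : Finset (Option ℕ) :=
  (VS S i).image some ∪ (if ext then {none} else ∅)

/-- Consistency of an equation system over ω ∪ {*}. -/
def ConsistentE (E : Finset (ℕ × Option ℕ)) : Prop :=
  ∀ p ∈ E, ∀ q ∈ E, p.1 = q.1 → p.2 = q.2

/-- Lift the left-hand side of a rule to an equation system over ω ∪ {*}. -/
def liftK (K : Finset (ℕ × ℕ)) : Finset (ℕ × Option ℕ) :=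
  K.image fun p => (p.1, some p.2)

/-- A finite directed labeled graph: the nodes are `0, …, n-1`, with a distinguished root,
each node carries either an attribute (working node) or a set of rules (terminal node),
and edges are labeled with elements of ω ∪ {*}. -/
structure DGraph where
  n : ℕ
  root : ℕ
  label : ℕ → ℕ ⊕ Finset Rule
  edges : Finset (ℕ × Option ℕ × ℕ)

namespace DGraph

def step (G : DGraph) (u v : ℕ) : Prop := ∃ l, (u, l, v) ∈ G.edges

/-- The graph has no directed cycles. -/
def Acyclic (G : DGraph) : Prop := ∀ v, ¬ Relation.TransGen G.step v v

/-- A node is terminal if no edge leaves it. -/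
def IsTerminal (G : DGraph) (v : ℕ) : Prop := ∀ e ∈ G.edges, e.1 ≠ v

/-- The set of rules attached to a (terminal) node. -/
def termSet (G : DGraph) (v : ℕ) : Finset Rule :=
  Sum.elim (fun _ => (∅ : Finset Rule)) id (G.label v)

/-- `G` is an acyclic decision graph over the rule system `S`;
`ext = false` : branching over `V_S` (o-type), `ext = true` : branching over `EV_S` (e-type).
Terminal nodes are labeled with subsets of S; each working node is labeled with an
attribute `a` of `A(S)` and has exactly one leaving edge for every element of
`V_S(a)` (resp. `EV_S(a)`), the edges leaving it being labeled with these
pairwise different elements. -/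
def IsDG (G : DGraph) (S : Finset Rule) (ext : Bool) : Prop :=
  G.root < G.n ∧
  (∀ e ∈ G.edges, e.1 < G.n ∧ e.2.2 < G.n) ∧
  G.Acyclic ∧
  (∀ v < G.n,
    if G.IsTerminal v then
      ∃ Z : Finset Rule, G.label v = Sum.inr Z ∧ Z ⊆ S
    else
      ∃ a : ℕ, G.label v = Sum.inl a ∧ a ∈ attrs S ∧
        (∀ l : Option ℕ, (∃ w, (v, l, w) ∈ G.edges) ↔ l ∈ allowed S ext a) ∧
        (∀ l w w', (v, l, w) ∈ G.edges → (v, l, w') ∈ G.edges → w = w'))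

/-- `G` is a finite directed tree with root: the root has no entering edge and every
other node has exactly one entering edge (together with acyclicity this makes the
graph a rooted tree). -/
def IsTree (G : DGraph) : Prop :=
  (∀ e ∈ G.edges, e.2.2 ≠ G.root) ∧
  (∀ v < G.n, v ≠ G.root → ∃! e, e ∈ G.edges ∧ e.2.2 = v)

/-- `chainFrom G v p t`: the list `p` of (node, leaving-edge-label) pairs forms a
directed path in `G` starting at `v` and ending at `t`. -/
def chainFrom (G : DGraph) : ℕ → List (ℕ × Option ℕ) → ℕ → Prop
  | v, [], t => v = t
  | v, e :: rest, t => e.1 = v ∧ ∃ w, (v, e.2, w) ∈ G.edges ∧ chainFrom G w rest t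

/-- A complete path: from the root to a terminal node; it is recorded by the list of
its working nodes with the labels of the edges taken, together with its terminal node. -/
def IsCompletePath (G : DGraph) (p : List (ℕ × Option ℕ)) (t : ℕ) : Prop :=
  G.chainFrom G.root p t ∧ G.IsTerminal t ∧ t < G.n

/-- K(ξ): the equation system associated with a complete path. -/
def pathEqs (G : DGraph) (p : List (ℕ × Option ℕ)) : Finset (ℕ × Option ℕ) :=
  (p.filterMap fun e =>
    Sum.elim (fun a => some (a, e.2)) (fun _ => none) (G.label e.1)).toFinset

/-- L(Γ): the number of nodes. -/
def size (G : DGraph) : ℕ := G.n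

/-- T(Γ): the number of terminal nodes labeled with pairwise different sets of rules. -/
def tCount (G : DGraph) : ℕ :=
  (((Finset.range G.n).filter fun v => G.IsTerminal v).image fun v => G.termSet v).card

/-- h(Γ): the maximum number of working nodes on a complete path. -/
def depth (G : DGraph) : ℕ :=
  sSup {m | ∃ p t, G.IsCompletePath p t ∧ p.length = m}

/-- Path conditions for (the solutions of) the problems All Rules / EAll Rules. -/
def SolvesAR (G : DGraph) (S : Finset Rule) : Prop :=
  ∀ p t, G.IsCompletePath p t → ConsistentE (G.pathEqs p) →
    (∀ r ∈ G.termSet t, liftK r.K ⊆ G.pathEqs p) ∧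
    (∀ r ∈ S, r ∉ G.termSet t → ¬ ConsistentE (liftK r.K ∪ G.pathEqs p))

/-- Path conditions for the problems All Decisions / EAll Decisions. -/
def SolvesAD (G : DGraph) (S : Finset Rule) : Prop :=
  ∀ p t, G.IsCompletePath p t → ConsistentE (G.pathEqs p) →
    (∀ r ∈ G.termSet t, liftK r.K ⊆ G.pathEqs p) ∧
    (∀ r ∈ S, r ∉ G.termSet t → r.rhs ∉ (G.termSet t).image Rule.rhs →
      ¬ ConsistentE (liftK r.K ∪ G.pathEqs p))

/-- Path conditions for the problems Some Rules / ESome Rules. -/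
def SolvesSR (G : DGraph) (S : Finset Rule) : Prop :=
  ∀ p t, G.IsCompletePath p t → ConsistentE (G.pathEqs p) →
    (∀ r ∈ G.termSet t, liftK r.K ⊆ G.pathEqs p) ∧
    (G.termSet t = ∅ → ∀ r ∈ S, ¬ ConsistentE (liftK r.K ∪ G.pathEqs p))

end DGraph

/-- Γ is a decision tree over S solving AR(S) (an o-tree). -/
def TreeSolvesAR (S : Finset Rule) (G : DGraph) : Prop :=
  G.IsDG S false ∧ G.IsTree ∧ G.SolvesAR S
/-- Γ is a decision tree over S solving EAR(S) (an e-tree). -/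
def TreeSolvesEAR (S : Finset Rule) (G : DGraph) : Prop :=
  G.IsDG S true ∧ G.IsTree ∧ G.SolvesAR S
/-- Γ is a decision tree over S solving AD(S) (an o-tree). -/
def TreeSolvesAD (S : Finset Rule) (G : DGraph) : Prop :=
  G.IsDG S false ∧ G.IsTree ∧ G.SolvesAD S
/-- Γ is a decision tree over S solving EAD(S) (an e-tree). -/
def TreeSolvesEAD (S : Finset Rule) (G : DGraph) : Prop :=
  G.IsDG S true ∧ G.IsTree ∧ G.SolvesAD S
/-- Γ is a decision tree over S solving SR(S) (an o-tree). -/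
def TreeSolvesSR (S : Finset Rule) (G : DGraph) : Prop :=
  G.IsDG S false ∧ G.IsTree ∧ G.SolvesSR S
/-- Γ is a decision tree over S solving ESR(S) (an e-tree). -/
def TreeSolvesESR (S : Finset Rule) (G : DGraph) : Prop :=
  G.IsDG S true ∧ G.IsTree ∧ G.SolvesSR S

/-- L_AR(S): minimum number of nodes of a decision tree over S solving AR(S). -/
def L_AR (S : Finset Rule) : ℕ := sInf {m | ∃ G : DGraph, TreeSolvesAR S G ∧ G.size = m}
def L_EAR (S : Finset Rule) : ℕ := sInf {m | ∃ G : DGraph, TreeSolvesEAR S G ∧ G.size = m}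
def L_AD (S : Finset Rule) : ℕ := sInf {m | ∃ G : DGraph, TreeSolvesAD S G ∧ G.size = m}
def L_EAD (S : Finset Rule) : ℕ := sInf {m | ∃ G : DGraph, TreeSolvesEAD S G ∧ G.size = m}
def L_SR (S : Finset Rule) : ℕ := sInf {m | ∃ G : DGraph, TreeSolvesSR S G ∧ G.size = m}
def L_ESR (S : Finset Rule) : ℕ := sInf {m | ∃ G : DGraph, TreeSolvesESR S G ∧ G.size = m}

/-- T_AR(S): minimum number of differently-labeled terminal nodes of a decision tree
over S solving AR(S); similarly for the other problems. -/
def T_AR (S : Finset Rule) : ℕ := sInf {m | ∃ G : DGraph, TreeSolvesAR S G ∧ G.tCount = m}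
def T_EAR (S : Finset Rule) : ℕ := sInf {m | ∃ G : DGraph, TreeSolvesEAR S G ∧ G.tCount = m}
def T_AD (S : Finset Rule) : ℕ := sInf {m | ∃ G : DGraph, TreeSolvesAD S G ∧ G.tCount = m}
def T_EAD (S : Finset Rule) : ℕ := sInf {m | ∃ G : DGraph, TreeSolvesEAD S G ∧ G.tCount = m}
def T_SR (S : Finset Rule) : ℕ := sInf {m | ∃ G : DGraph, TreeSolvesSR S G ∧ G.tCount = m}
def T_ESR (S : Finset Rule) : ℕ := sInf {m | ∃ G : DGraph, TreeSolvesESR S G ∧ G.tCount = m}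

/-- h_AR(S): minimum depth of a decision tree over S solving AR(S); similarly for the others. -/
def h_AR (S : Finset Rule) : ℕ := sInf {m | ∃ G : DGraph, TreeSolvesAR S G ∧ G.depth = m}
def h_EAR (S : Finset Rule) : ℕ := sInf {m | ∃ G : DGraph, TreeSolvesEAR S G ∧ G.depth = m}
def h_AD (S : Finset Rule) : ℕ := sInf {m | ∃ G : DGraph, TreeSolvesAD S G ∧ G.depth = m}
def h_EAD (S : Finset Rule) : ℕ := sInf {m | ∃ G : DGraph, TreeSolvesEAD S G ∧ G.depth = m}
def h_SR (S : Finset Rule) : ℕ := sInf {m | ∃ G : DGraph, TreeSolvesSR S G ∧ G.depth = m}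
def h_ESR (S : Finset Rule) : ℕ := sInf {m | ∃ G : DGraph, TreeSolvesESR S G ∧ G.depth = m}

/-- L^DG_SR(S): minimum number of nodes of an acyclic decision graph solving SR(S). -/
def LDG_SR (S : Finset Rule) : ℕ :=
  sInf {m | ∃ G : DGraph, G.IsDG S false ∧ G.SolvesSR S ∧ G.size = m}
/-- L^DG_ESR(S): minimum number of nodes of an acyclic decision graph solving ESR(S). -/
def LDG_ESR (S : Finset Rule) : ℕ :=
  sInf {m | ∃ G : DGraph, G.IsDG S true ∧ G.SolvesSR S ∧ G.size = m}

/-- A node cover of the hypergraph G(S). -/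
def IsNodeCover (S : Finset Rule) (B : Finset ℕ) : Prop :=
  B ⊆ attrs S ∧ ∀ r ∈ S, (Rule.attrs r).Nonempty → (Rule.attrs r ∩ B).Nonempty

/-- β(S): the minimum cardinality of a node cover of the hypergraph G(S). -/
def beta (S : Finset Rule) : ℕ := sInf {c | ∃ B, IsNodeCover S B ∧ B.card = c}

/-- S⁺: the subsystem of S consisting of all rules of length d(S). -/
def Splus (S : Finset Rule) : Finset Rule := S.filter fun r => r.len = dPar S

/-- β⁺(S) = β(S⁺). -/
def betaPlus (S : Finset Rule) : ℕ := beta (Splus S)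

/-- The rule r_α : delete from the left-hand side of r all equations belonging to α. -/
def Rule.restrict (r : Rule) (α : Finset (ℕ × Option ℕ)) : Rule :=
  ⟨r.K.filter fun p => (p.1, some p.2) ∉ α, r.rhs⟩

/-- S_α : the system of the rules r_α for all r ∈ S with K(r) ∪ α consistent. -/
def restrict (S : Finset Rule) (α : Finset (ℕ × Option ℕ)) : Finset Rule :=
  (S.filter fun r => ConsistentE (liftK r.K ∪ α)).image fun r => r.restrict α

/-- E_C(S): consistent equation systems whose attributes are in A(S) and whose
values belong to V_S (ext = false) resp. EV_S (ext = true). -/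
def ESys (S : Finset Rule) (ext : Bool) : Set (Finset (ℕ × Option ℕ)) :=
  {α | ConsistentE α ∧ ∀ p ∈ α, p.1 ∈ attrs S ∧ p.2 ∈ allowed S ext p.1}

/-- I_SR(S). -/
def I_SR (S : Finset Rule) : Finset Rule :=
  if ∃ r ∈ S, r.len = 0 then S.filter fun r => r.len = 0 else S

/-- D₀(S): the right-hand sides of the rules of S of length 0. -/
def D0 (S : Finset Rule) : Finset ℕ := (S.filter fun r => r.len = 0).image Rule.rhs

/-- I_AD(S). -/
def I_AD (S : Finset Rule) : Finset Rule :=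
  S.filter fun r => r.len = 0 ∨ r.rhs ∉ D0 S

def betaC (S : Finset Rule) (ext : Bool) : ℕ :=
  sSup {b | ∃ α ∈ ESys S ext, beta (restrict S α) = b}
def betaCplus (S : Finset Rule) (ext : Bool) : ℕ :=
  sSup {b | ∃ α ∈ ESys S ext, betaPlus (restrict S α) = b}
def betaI (S : Finset Rule) (I : Finset Rule → Finset Rule) : ℕ :=
  sSup {b | ∃ α ∈ ESys S true, beta (I (restrict S α)) = b}
def betaIplus (S : Finset Rule) (I : Finset Rule → Finset Rule) : ℕ :=
  sSup {b | ∃ α ∈ ESys S true, betaPlus (I (restrict S α)) = b}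

def beta_AR (S : Finset Rule) : ℕ := betaC S false
def beta_AD (S : Finset Rule) : ℕ := betaC S false
def beta_SR (S : Finset Rule) : ℕ := betaC S false
def beta_EAR (S : Finset Rule) : ℕ := betaC S true
def beta_ARplus (S : Finset Rule) : ℕ := betaCplus S false
def beta_ADplus (S : Finset Rule) : ℕ := betaCplus S false
def beta_SRplus (S : Finset Rule) : ℕ := betaCplus S false
def beta_EARplus (S : Finset Rule) : ℕ := betaCplus S true
def beta_EAD (S : Finset Rule) : ℕ := betaI S I_AD
def beta_EADplus (S : Finset Rule) : ℕ := betaIplus S I_AD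
def beta_ESR (S : Finset Rule) : ℕ := betaI S I_SR
def beta_ESRplus (S : Finset Rule) : ℕ := betaIplus S I_SR

/-- R_SR(S). -/
def R_SR (S : Finset Rule) : Finset Rule :=
  S.filter fun r => ¬ ∃ r' ∈ S, r'.K ⊂ r.K

/-- R_AD(S). -/
def R_AD (S : Finset Rule) : Finset Rule :=
  S.filter fun r => ¬ ∃ r' ∈ S, r'.K ⊂ r.K ∧ r'.rhs = r.rhs

/-- A reduced decision rule system. -/
def Reduced (S : Finset Rule) : Prop :=
  attrs S ⊆ Finset.range (nPar S + 1) ∧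
  rhsSet S ⊆ Finset.range ((rhsSet S).card + 1) ∧
  (∀ i ∈ attrs S, VS S i ⊆ Finset.range (kPar S + 1)) ∧
  1 ≤ dPar S

/-- Length of the binary representation of a natural number. -/
def bitLen (m : ℕ) : ℕ := max 1 (Nat.size m)

/-- The length of the word "(a⟨i⟩=⟨δ⟩)" encoding one equation. -/
def eqLen (p : ℕ × ℕ) : ℕ := 4 + bitLen p.1 + bitLen p.2

/-- The length of the word encoding one rule (with the "∧" signs and "→"). -/
def Rule.wordLen (r : Rule) : ℕ :=
  (∑ p ∈ r.K, eqLen p) + (r.K.card - 1) + 1 + bitLen r.rhs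

/-- size(S): the length of the word representing S (with ";" separating the rules). -/
def sizeS (S : Finset Rule) : ℕ := (∑ r ∈ S, r.wordLen) + (S.card - 1)

/-! Take the rules `(a_{2i} = δ) ∧ (a_{2i+1} = δ) → 0` for `i < m`, `δ < k`, together with
`(a_0 = 0) ∧ ⋯ ∧ (a_{d-1} = 0) → 0`: at most `mk + 1` rules, and `k(S) = k`, `d(S) = d`.
An assignment giving `a_{2i}` and `a_{2i+1}` different values for every `i` realizes no rule,
so the leaf it reaches in a tree solving SR(S) must have empty label, and its path must
contradict every rule. For the pair rule whose value `δ` is the value of `a_{2i+1}`, only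
`a_{2i}` can be contradicted, so the path queries every `a_{2i}`. Hence the `2 ^ m` such
assignments that differ on the even attributes reach pairwise different leaves, and
`L_SR(S) ≥ 2 ^ m`, which outgrows any polynomial in `mk + 1`. (The complete `k`-ary tree of
depth `2m` shows that some tree solves SR(S), so that `L_SR(S)` is not the junk value `sInf ∅`.) -/

end DRS

lemma Polynomial.eval_le_eval_one_mul_pow (p : Polynomial ℕ) {x y : ℕ} (hxy : x ≤ y)
    (hy : 0 < y) : p.eval x ≤ p.eval 1 * y ^ p.natDegree := by
  rw [Polynomial.eval_eq_sum_range, Polynomial.eval_eq_sum_range, Finset.sum_mul]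
  refine Finset.sum_le_sum fun i hi => ?_
  rw [one_pow, mul_one]
  refine Nat.mul_le_mul_left _ ?_
  calc x ^ i ≤ y ^ i := Nat.pow_le_pow_left hxy i
    _ ≤ y ^ p.natDegree := Nat.pow_le_pow_right hy (Nat.lt_succ_iff.1 (Finset.mem_range.1 hi))

lemma Nat.eventually_mul_pow_lt_two_pow (B D : ℕ) :
    ∀ᶠ n : ℕ in Filter.atTop, B * n ^ D < 2 ^ n := by
  have h := ((isLittleO_pow_const_const_pow_of_one_lt (R := ℝ) D one_lt_two).const_mul_left
    (B : ℝ)).bound one_half_pos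
  filter_upwards [h] with n hn
  rw [Real.norm_of_nonneg (by positivity), Real.norm_of_nonneg (by positivity)] at hn
  have : ((B * n ^ D : ℕ) : ℝ) < 2 ^ n := by
    push_cast
    linarith [pow_pos (two_pos : (0 : ℝ) < 2) n]
  exact_mod_cast this

namespace DRS

def Rule.IsRealizedBy (r : Rule) (x : ℕ → ℕ) : Prop := ∀ q ∈ r.K, x q.1 = q.2

lemma mem_attrs {S : Finset Rule} {a : ℕ} : a ∈ attrs S ↔ ∃ r ∈ S, ∃ δ, (a, δ) ∈ r.K := by
  simp [attrs, Rule.attrs]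

namespace DGraph

variable {G : DGraph} {S : Finset Rule}

lemma mem_pathEqs {p : List (ℕ × Option ℕ)} {pr : ℕ × Option ℕ} :
    pr ∈ G.pathEqs p ↔ ∃ e ∈ p, G.label e.1 = Sum.inl pr.1 ∧ e.2 = pr.2 := by
  simp only [pathEqs, List.mem_toFinset, List.mem_filterMap]
  refine exists_congr fun e => and_congr_right fun _ => ?_
  cases G.label e.1 <;> simp [Prod.ext_iff, eq_comm]

lemma chainFrom_append {v t : ℕ} {p q : List (ℕ × Option ℕ)} :
    G.chainFrom v (p ++ q) t ↔ ∃ u, G.chainFrom v p u ∧ G.chainFrom u q t := by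
  induction p generalizing v with
  | nil => simp [chainFrom]
  | cons e p ih =>
    simp only [List.cons_append, chainFrom, ih]
    constructor
    · rintro ⟨he, w, hw, u, hp, hq⟩
      exact ⟨u, ⟨he, w, hw, hp⟩, hq⟩
    · rintro ⟨u, ⟨he, w, hw, hp⟩, hq⟩
      exact ⟨he, w, hw, u, hp, hq⟩

lemma chainFrom_concat {v t u : ℕ} {l : Option ℕ} {p : List (ℕ × Option ℕ)} :
    G.chainFrom v (p ++ [(u, l)]) t ↔ G.chainFrom v p u ∧ (u, l, t) ∈ G.edges := by
  simp [chainFrom_append, chainFrom]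

lemma acyclic_of_forall_lt (h : ∀ e ∈ G.edges, e.1 < e.2.2) : G.Acyclic := by
  have hlt : ∀ u v, G.step u v → u < v := fun u v ⟨l, hl⟩ => h _ hl
  have hlt' : ∀ {u v}, Relation.TransGen G.step u v → u < v := by
    intro u v h
    induction h with
    | single h => exact hlt _ _ h
    | tail _ h ih => exact ih.trans (hlt _ _ h)
  exact fun v hv => lt_irrefl v (hlt' hv)

lemma IsTree.eq_of_chainFrom_root (hT : G.IsTree) (hE : ∀ e ∈ G.edges, e.1 < G.n)
    {p q : List (ℕ × Option ℕ)} {t : ℕ} (ht : t < G.n)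
    (hp : G.chainFrom G.root p t) (hq : G.chainFrom G.root q t) : p = q := by
  induction p using List.reverseRecOn generalizing q t with
  | nil =>
    obtain rfl : G.root = t := hp
    rcases q.eq_nil_or_concat' with rfl | ⟨q, ⟨u, l⟩, rfl⟩
    · rfl
    · exact absurd rfl (hT.1 _ (chainFrom_concat.1 hq).2)
  | append_singleton p e ih =>
    obtain ⟨hp, he⟩ := chainFrom_concat.1 hp
    have hroot : t ≠ G.root := hT.1 _ he
    rcases q.eq_nil_or_concat' with rfl | ⟨q, ⟨u', l'⟩, rfl⟩
    · exact absurd (hq : G.root = t).symm hroot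
    obtain ⟨hq', he'⟩ := chainFrom_concat.1 hq
    obtain ⟨_, _, huniq⟩ := hT.2 t ht hroot
    have hee' : (e.1, e.2, t) = (u', l', t) := (huniq _ ⟨he, rfl⟩).trans (huniq _ ⟨he', rfl⟩).symm
    simp only [Prod.mk.injEq, and_true] at hee'
    obtain ⟨rfl, rfl⟩ := hee'
    rw [ih (hE _ he) hp hq']

def Follows (G : DGraph) (x : ℕ → ℕ) (p : List (ℕ × Option ℕ)) : Prop :=
  ∀ e ∈ p, ∀ a, G.label e.1 = Sum.inl a → e.2 = some (x a)

lemma Follows.snd_eq {x : ℕ → ℕ} {p : List (ℕ × Option ℕ)} (hp : G.Follows x p)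
    {pr : ℕ × Option ℕ} (hpr : pr ∈ G.pathEqs p) : pr.2 = some (x pr.1) := by
  obtain ⟨e, he, hlab, he2⟩ := mem_pathEqs.1 hpr
  rw [← he2, hp e he _ hlab]

def descendants (G : DGraph) (v : ℕ) : Finset ℕ :=
  (Finset.range G.n).filter fun w => Relation.TransGen G.step v w

lemma IsDG.card_descendants_lt {ext : Bool} (hG : G.IsDG S ext) {v w : ℕ} {l : Option ℕ}
    (hvw : (v, l, w) ∈ G.edges) : (G.descendants w).card < (G.descendants v).card := by
  refine Finset.card_lt_card ⟨fun u hu => ?_, fun hsub => ?_⟩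
  · simp only [descendants, Finset.mem_filter] at hu ⊢
    exact ⟨hu.1, .head ⟨l, hvw⟩ hu.2⟩
  · have hw : w ∈ G.descendants v := by
      simp only [descendants, Finset.mem_filter, Finset.mem_range]
      exact ⟨(hG.2.1 _ hvw).2, .single ⟨l, hvw⟩⟩
    exact hG.2.2.1 w (Finset.mem_filter.1 (hsub hw)).2

lemma IsDG.exists_chainFrom_follows (hG : G.IsDG S false) {x : ℕ → ℕ}
    (hx : ∀ a ∈ attrs S, x a ∈ VS S a) {v : ℕ} (hv : v < G.n) :
    ∃ p t, G.chainFrom v p t ∧ G.IsTerminal t ∧ t < G.n ∧ G.Follows x p := by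
  induction hc : (G.descendants v).card using Nat.strong_induction_on generalizing v with
  | _ c ih =>
    by_cases hterm : G.IsTerminal v
    · exact ⟨[], v, rfl, hterm, hv, by simp [Follows]⟩
    have hnode := hG.2.2.2 v hv
    rw [if_neg hterm] at hnode
    obtain ⟨a, hlab, ha, hedges, -⟩ := hnode
    obtain ⟨w, hw⟩ := (hedges (some (x a))).2 <| by
      simp only [allowed, Bool.false_eq_true, if_false, Finset.union_empty]
      exact Finset.mem_image_of_mem _ (hx a ha)
    obtain ⟨p, t, hp, ht, htn, hfol⟩ :=
      ih _ (hc ▸ hG.card_descendants_lt hw) (hG.2.1 _ hw).2 rfl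
    refine ⟨(v, some (x a)) :: p, t, ⟨rfl, w, hw, hp⟩, ht, htn, ?_⟩
    rintro e (_ | ⟨_, he⟩) b hb
    · rw [hlab, Sum.inl.injEq] at hb
      rw [hb]
    · exact hfol e he b hb

lemma SolvesSR.exists_completePath_refuting (hSR : G.SolvesSR S) (hG : G.IsDG S false)
    (hWF : ∀ r ∈ S, r.WF) {x : ℕ → ℕ} (hx : ∀ a ∈ attrs S, x a ∈ VS S a)
    (hfalse : ∀ r ∈ S, ¬ r.IsRealizedBy x) :
    ∃ p t, G.IsCompletePath p t ∧ G.Follows x p ∧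
      ∀ r ∈ S, ∃ q ∈ r.K, q.2 ≠ x q.1 ∧ (q.1, some (x q.1)) ∈ G.pathEqs p := by
  obtain ⟨p, t, hp, ht, htn, hfol⟩ := hG.exists_chainFrom_follows hx hG.1
  have hcons : ConsistentE (G.pathEqs p) := fun P hP Q hQ h => by
    rw [hfol.snd_eq hP, hfol.snd_eq hQ, h]
  obtain ⟨hsub, hempty⟩ := hSR p t ⟨hp, ht, htn⟩ hcons
  refine ⟨p, t, ⟨hp, ht, htn⟩, hfol, fun r hr => ?_⟩
  have hterm : G.termSet t = ∅ := by
    have hnode := hG.2.2.2 t htn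
    rw [if_pos ht] at hnode
    obtain ⟨Z, hZ, hZS⟩ := hnode
    refine Finset.eq_empty_of_forall_notMem fun r' hr' => ?_
    have hr'S : r' ∈ S := hZS (by simpa [termSet, hZ] using hr')
    refine hfalse r' hr'S fun q hq => ?_
    have := hfol.snd_eq (hsub r' hr' (Finset.mem_image_of_mem _ hq))
    exact Option.some_injective _ this.symm
  by_contra! hnot
  have hagree : ∀ q ∈ r.K, ∀ Q ∈ G.pathEqs p, q.1 = Q.1 → some q.2 = Q.2 := by
    intro q hq Q hQ h
    rw [hfol.snd_eq hQ, ← h]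
    by_contra hne
    refine hnot q hq (fun h' => hne (by rw [h'])) ?_
    rw [h, ← hfol.snd_eq hQ]
    exact hQ
  refine hempty hterm r hr fun P hP Q hQ hPQ => ?_
  simp only [liftK, Finset.mem_union, Finset.mem_image] at hP hQ
  rcases hP with ⟨q, hq, rfl⟩ | hP <;> rcases hQ with ⟨q', hq', rfl⟩ | hQ
  · rw [hWF r hr q hq q' hq' hPQ]
  · exact hagree q hq Q hQ hPQ
  · exact (hagree q' hq' P hP hPQ.symm).symm
  · rw [hfol.snd_eq hP, hfol.snd_eq hQ, hPQ]

end DGraph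

section CompleteTree

variable {k : ℕ}

/-- The number of nodes of depth `< ℓ` in the complete `k`-ary tree, numbered breadth first
from the root `0`, so that the children of `v` are `k * v + c + 1` for `c < k`. -/
def levelStart (k : ℕ) : ℕ → ℕ
  | 0 => 0
  | ℓ + 1 => k * levelStart k ℓ + 1

/-- The labels of the edges on the path from the root to the node `v`. -/
def address (k v : ℕ) : List ℕ :=
  if v = 0 then [] else address k ((v - 1) / k) ++ [(v - 1) % k]
decreasing_by exact lt_of_le_of_lt (Nat.div_le_self _ _) (by omega)

lemma address_zero : address k 0 = [] := by
  rw [address, if_pos rfl]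

lemma address_child {v c : ℕ} (hc : c < k) : address k (k * v + c + 1) = address k v ++ [c] := by
  have hdiv : (k * v + c + 1 - 1) / k = v := by
    rw [Nat.add_sub_cancel, Nat.add_comm, Nat.add_mul_div_left _ _ (by omega),
      Nat.div_eq_of_lt hc, Nat.zero_add]
  have hmod : (k * v + c + 1 - 1) % k = c := by
    rw [Nat.add_sub_cancel, Nat.add_comm, Nat.add_mul_mod_self_left, Nat.mod_eq_of_lt hc]
  rw [address, if_neg (by omega), hdiv, hmod]

lemma length_address_lt_iff (hk : 0 < k) {v ℓ : ℕ} :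
    (address k v).length < ℓ ↔ v < levelStart k ℓ := by
  induction ℓ generalizing v with
  | zero => simp [levelStart]
  | succ ℓ ih =>
    rcases Nat.eq_zero_or_pos v with rfl | hv
    · simp [address_zero, levelStart]
    rw [address, if_neg hv.ne', List.length_append, List.length_singleton, Nat.add_lt_add_iff_right,
      ih, levelStart, Nat.div_lt_iff_lt_mul hk]
    rw [Nat.mul_comm k]
    omega

/-- The complete `k`-ary tree of depth `n` over `S`: a node of depth `j < n` queries the
attribute `a_j`, and a leaf is labeled with the rules realized along its address. -/
def completeTree (S : Finset Rule) (k n : ℕ) : DGraph where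
  n := levelStart k (n + 1)
  root := 0
  label v := if v < levelStart k n then Sum.inl (address k v).length
    else Sum.inr (S.filter fun r => r.IsRealizedBy fun a => (address k v).getD a 0)
  edges := (Finset.range (levelStart k n) ×ˢ Finset.range k).image
    fun vc => (vc.1, some vc.2, k * vc.1 + vc.2 + 1)

variable {S : Finset Rule} {n : ℕ}

lemma mem_completeTree_edges {e : ℕ × Option ℕ × ℕ} :
    e ∈ (completeTree S k n).edges ↔
      ∃ v < levelStart k n, ∃ c < k, e = (v, some c, k * v + c + 1) := by
  simp [completeTree, eq_comm, and_assoc]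

lemma completeTree_isTerminal_iff (hk : 0 < k) {v : ℕ} :
    (completeTree S k n).IsTerminal v ↔ levelStart k n ≤ v := by
  simp only [DGraph.IsTerminal, mem_completeTree_edges]
  constructor
  · intro h
    by_contra! hv
    exact h _ ⟨v, hv, 0, hk, rfl⟩ rfl
  · rintro h _ ⟨u, hu, c, -, rfl⟩ rfl
    omega

lemma completeTree_label_of_lt {v : ℕ} (hv : v < levelStart k n) :
    (completeTree S k n).label v = Sum.inl (address k v).length := by
  simp [completeTree, hv]

lemma child_lt_levelStart_succ {v c : ℕ} (hv : v < levelStart k n) (hc : c < k) :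
    k * v + c + 1 < levelStart k (n + 1) := by
  rw [levelStart]
  nlinarith

lemma completeTree_isDG (hk : 0 < k) (hA : Finset.range n ⊆ attrs S)
    (hV : ∀ a < n, VS S a = Finset.range k) : (completeTree S k n).IsDG S false := by
  have hchild : ∀ v c, v < k * v + c + 1 := fun v c => by nlinarith
  refine ⟨Nat.succ_pos _, ?_, DGraph.acyclic_of_forall_lt ?_, fun v hvN => ?_⟩
  · intro e he
    obtain ⟨v, hv, c, hc, rfl⟩ := mem_completeTree_edges.1 he
    have := child_lt_levelStart_succ hv hc
    exact ⟨(hchild v c).trans this, this⟩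
  · intro e he
    obtain ⟨v, -, c, -, rfl⟩ := mem_completeTree_edges.1 he
    exact hchild v c
  by_cases hv : v < levelStart k n
  · have hlen : (address k v).length < n := (length_address_lt_iff hk).2 hv
    rw [if_neg (by rw [completeTree_isTerminal_iff hk]; omega)]
    refine ⟨_, completeTree_label_of_lt hv, hA (Finset.mem_range.2 hlen), fun l => ?_, ?_⟩
    · simp only [mem_completeTree_edges, allowed, hV _ hlen, Prod.mk.injEq]
      simp [hv, eq_comm]
    · simp only [mem_completeTree_edges]
      rintro l w w' ⟨u, -, c, -, he⟩ ⟨u', -, c', -, he'⟩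
      simp only [Prod.mk.injEq] at he he'
      obtain ⟨rfl, rfl, rfl⟩ := he
      obtain ⟨rfl, hcc', rfl⟩ := he'
      rw [Option.some_injective _ hcc']
  · rw [if_pos ((completeTree_isTerminal_iff hk).2 (not_lt.1 hv))]
    exact ⟨_, if_neg hv, Finset.filter_subset _ _⟩

lemma completeTree_isTree (hk : 0 < k) : (completeTree S k n).IsTree := by
  refine ⟨?_, fun v hv hv0 => ?_⟩
  · intro e he
    obtain ⟨v, -, c, -, rfl⟩ := mem_completeTree_edges.1 he
    exact Nat.succ_ne_zero _
  have hv0 : 0 < v := Nat.pos_of_ne_zero hv0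
  have hparent : (v - 1) / k < levelStart k n := by
    change v < levelStart k (n + 1) at hv
    rw [levelStart] at hv
    rw [Nat.div_lt_iff_lt_mul hk, Nat.mul_comm]
    omega
  refine ⟨((v - 1) / k, some ((v - 1) % k), v), ⟨?_, rfl⟩, ?_⟩
  · refine mem_completeTree_edges.2 ⟨(v - 1) / k, hparent, (v - 1) % k, Nat.mod_lt _ hk, ?_⟩
    have := Nat.div_add_mod (v - 1) k
    simp only [Prod.mk.injEq, true_and]
    omega
  · rintro e ⟨he, rfl⟩
    obtain ⟨u, -, c, hc, rfl⟩ := mem_completeTree_edges.1 he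
    obtain ⟨hu, hc'⟩ := (Nat.div_mod_unique hk).2 ⟨show c + k * u = k * u + c + 1 - 1 by omega, hc⟩
    rw [hu, hc']

lemma completeTree_chainFrom {v t : ℕ} {p : List (ℕ × Option ℕ)}
    (h : (completeTree S k n).chainFrom v p t) :
    ∃ l, address k t = address k v ++ l ∧
      ∀ j, (address k v).length ≤ j → j < (address k t).length →
        (j, some ((address k t).getD j 0)) ∈ (completeTree S k n).pathEqs p := by
  induction p generalizing v with
  | nil =>
    obtain rfl : v = t := h
    exact ⟨[], by simp, fun j h1 h2 => absurd h2 (not_lt.2 h1)⟩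
  | cons e p ih =>
    obtain ⟨rfl, w, hw, hp⟩ := h
    obtain ⟨u, hu, c, hc, he⟩ := mem_completeTree_edges.1 hw
    simp only [Prod.mk.injEq] at he
    obtain ⟨rfl, he2, rfl⟩ := he
    obtain ⟨l, hl, hmem⟩ := ih hp
    rw [address_child hc] at hl hmem
    refine ⟨c :: l, by simp [hl], fun j hj1 hj2 => ?_⟩
    rcases hj1.eq_or_lt with rfl | hj1
    · refine DGraph.mem_pathEqs.2 ⟨e, List.mem_cons_self, completeTree_label_of_lt hu, ?_⟩
      change e.2 = some _
      simp [hl, he2]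
    · obtain ⟨e', he', hlab, he'2⟩ := DGraph.mem_pathEqs.1 (hmem j (by simpa using hj1) hj2)
      exact DGraph.mem_pathEqs.2 ⟨e', List.mem_cons_of_mem _ he', hlab, he'2⟩

lemma completeTree_solvesSR (hk : 0 < k) (hA : attrs S ⊆ Finset.range n) :
    (completeTree S k n).SolvesSR S := by
  rintro p t ⟨hp, ht, htn⟩ -
  set x : ℕ → ℕ := fun a => (address k t).getD a 0
  have ht' : levelStart k n ≤ t := (completeTree_isTerminal_iff hk).1 ht
  have hlen : (address k t).length = n := by
    have := (length_address_lt_iff hk (ℓ := n + 1)).2 htn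
    have := (length_address_lt_iff hk (ℓ := n)).not.2 (not_lt.2 ht')
    omega
  have hmem : ∀ j < n, (j, some (x j)) ∈ (completeTree S k n).pathEqs p := by
    obtain ⟨-, -, hmem⟩ := completeTree_chainFrom hp
    exact fun j hj => hmem j (by simp [completeTree, address_zero]) (hlen ▸ hj)
  have hattr : ∀ r ∈ S, ∀ q ∈ r.K, q.1 < n := fun r hr q hq =>
    Finset.mem_range.1 (hA (mem_attrs.2 ⟨r, hr, q.2, hq⟩))
  have hterm : (completeTree S k n).termSet t = S.filter fun r => r.IsRealizedBy x := by
    simp [DGraph.termSet, completeTree, not_lt.2 ht', x]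
  refine ⟨fun r hr => ?_, fun hempty r hr hcons => ?_⟩
  · rw [hterm, Finset.mem_filter] at hr
    intro P hP
    obtain ⟨q, hq, rfl⟩ := Finset.mem_image.1 hP
    simpa [hr.2 q hq] using hmem q.1 (hattr r hr.1 q hq)
  · obtain ⟨q, hq, hne⟩ : ∃ q ∈ r.K, x q.1 ≠ q.2 := by
      by_contra! hreal
      have hr' : r ∈ S.filter fun r => r.IsRealizedBy x := Finset.mem_filter.2 ⟨hr, hreal⟩
      rw [← hterm, hempty] at hr'
      exact Finset.notMem_empty r hr'
    have hq' : (q.1, some q.2) ∈ liftK r.K := Finset.mem_image_of_mem _ hq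
    have hx : (q.1, some (x q.1)) ∈ (completeTree S k n).pathEqs p := hmem _ (hattr r hr q hq)
    exact hne (Option.some_injective _
      (hcons _ (Finset.mem_union_right _ hx) _ (Finset.mem_union_left _ hq') rfl))

lemma treeSolvesSR_completeTree (hk : 0 < k) (hA : attrs S = Finset.range n)
    (hV : ∀ a < n, VS S a = Finset.range k) : TreeSolvesSR S (completeTree S k n) :=
  ⟨completeTree_isDG hk hA.ge hV, completeTree_isTree hk, completeTree_solvesSR hk hA.le⟩

end CompleteTree

def pairRule (i δ : ℕ) : Rule := ⟨{(2 * i, δ), (2 * i + 1, δ)}, 0⟩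

def zerosRule (d : ℕ) : Rule := ⟨(Finset.range d).image fun j => (j, 0), 0⟩

def pairSystem (m k d : ℕ) : Finset Rule :=
  insert (zerosRule d) ((Finset.range m ×ˢ Finset.range k).image fun q => pairRule q.1 q.2)

section PairSystem

variable {m k d : ℕ}

lemma mem_pairRule_K {q : ℕ × ℕ} {i δ : ℕ} :
    q ∈ (pairRule i δ).K ↔ q = (2 * i, δ) ∨ q = (2 * i + 1, δ) := by
  simp [pairRule]

lemma mem_zerosRule_K {q : ℕ × ℕ} : q ∈ (zerosRule d).K ↔ q.1 < d ∧ q.2 = 0 := by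
  rcases q with ⟨a, δ⟩
  simp [zerosRule, eq_comm]

lemma mem_pairSystem {r : Rule} :
    r ∈ pairSystem m k d ↔ r = zerosRule d ∨ ∃ i < m, ∃ δ < k, r = pairRule i δ := by
  simp [pairSystem, eq_comm, and_assoc]

lemma pairRule_mem_pairSystem {i δ : ℕ} (hi : i < m) (hδ : δ < k) :
    pairRule i δ ∈ pairSystem m k d :=
  mem_pairSystem.2 (.inr ⟨i, hi, δ, hδ, rfl⟩)

lemma pairSystem_WF : ∀ r ∈ pairSystem m k d, r.WF := by
  intro r hr q hq q' hq' h
  rcases mem_pairSystem.1 hr with rfl | ⟨i, -, δ, -, rfl⟩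
  · rw [mem_zerosRule_K] at hq hq'
    exact Prod.ext h (hq.2.trans hq'.2.symm)
  · rw [mem_pairRule_K] at hq hq'
    rcases hq with rfl | rfl <;> rcases hq' with rfl | rfl <;> simp_all

lemma lt_of_mem_K_of_mem_pairSystem (hdm : d ≤ 2 * m) (hk : 0 < k) {r : Rule}
    (hr : r ∈ pairSystem m k d) {q : ℕ × ℕ} (hq : q ∈ r.K) : q.1 < 2 * m ∧ q.2 < k := by
  rcases mem_pairSystem.1 hr with rfl | ⟨i, hi, δ, hδ, rfl⟩
  · rw [mem_zerosRule_K] at hq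
    omega
  · rcases mem_pairRule_K.1 hq with rfl | rfl <;> simp <;> omega

lemma mem_pairRule_div_two_K {a δ : ℕ} : (a, δ) ∈ (pairRule (a / 2) δ).K := by
  simp only [mem_pairRule_K, Prod.mk.injEq, and_true]
  omega

lemma attrs_pairSystem (hdm : d ≤ 2 * m) (hk : 0 < k) :
    attrs (pairSystem m k d) = Finset.range (2 * m) := by
  ext a
  rw [mem_attrs, Finset.mem_range]
  constructor
  · rintro ⟨r, hr, δ, hq⟩
    exact (lt_of_mem_K_of_mem_pairSystem hdm hk hr hq).1
  · intro ha
    exact ⟨_, pairRule_mem_pairSystem (by omega) hk, 0, mem_pairRule_div_two_K⟩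

lemma VS_pairSystem (hdm : d ≤ 2 * m) (hk : 0 < k) {a : ℕ} (ha : a < 2 * m) :
    VS (pairSystem m k d) a = Finset.range k := by
  ext δ
  simp only [VS, Finset.mem_image, Finset.mem_filter, Finset.mem_biUnion, Finset.mem_range]
  constructor
  · rintro ⟨q, ⟨⟨r, hr, hq⟩, -⟩, rfl⟩
    exact (lt_of_mem_K_of_mem_pairSystem hdm hk hr hq).2
  · intro hδ
    exact ⟨(a, δ), ⟨⟨_, pairRule_mem_pairSystem (by omega) hδ, mem_pairRule_div_two_K⟩, rfl⟩, rfl⟩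

lemma kPar_pairSystem (hdm : d ≤ 2 * m) (hk : 0 < k) (hm : 0 < m) :
    kPar (pairSystem m k d) = k := by
  rw [kPar, attrs_pairSystem hdm hk,
    Finset.sup_congr rfl fun a ha => by rw [VS_pairSystem hdm hk (Finset.mem_range.1 ha),
      Finset.card_range]]
  exact Finset.sup_const ⟨0, by simp; omega⟩ k

lemma dPar_pairSystem (hd : 2 ≤ d) : dPar (pairSystem m k d) = d := by
  have hlen : (zerosRule d).len = d := by
    rw [Rule.len, zerosRule, Finset.card_image_of_injective _ fun _ _ h => congrArg Prod.fst h,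
      Finset.card_range]
  refine le_antisymm (Finset.sup_le fun r hr => ?_)
    (hlen.symm.le.trans (Finset.le_sup (mem_pairSystem.2 (.inl rfl))))
  rcases mem_pairSystem.1 hr with rfl | ⟨i, -, δ, -, rfl⟩
  · exact hlen.le
  · rw [Rule.len, pairRule, Finset.card_pair (by simp)]
    exact hd

lemma reduced_pairSystem (hdm : d ≤ 2 * m) (hk : 0 < k) (hm : 0 < m) (hd : 2 ≤ d) :
    Reduced (pairSystem m k d) := by
  refine ⟨?_, ?_, fun a ha => ?_, by rw [dPar_pairSystem hd]; omega⟩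
  · rw [nPar, attrs_pairSystem hdm hk, Finset.card_range]
    exact Finset.range_subset_range.2 (Nat.le_succ _)
  · intro σ hσ
    obtain ⟨r, hr, rfl⟩ := Finset.mem_image.1 hσ
    rcases mem_pairSystem.1 hr with rfl | ⟨i, -, δ, -, rfl⟩ <;> simp [zerosRule, pairRule]
  · rw [attrs_pairSystem hdm hk, Finset.mem_range] at ha
    rw [VS_pairSystem hdm hk ha, kPar_pairSystem hdm hk hm]
    exact Finset.range_subset_range.2 (Nat.le_succ _)

lemma card_pairSystem_le : (pairSystem m k d).card ≤ m * k + 1 := by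
  calc (pairSystem m k d).card
      ≤ ((Finset.range m ×ˢ Finset.range k).image fun q => pairRule q.1 q.2).card + 1 :=
        Finset.card_insert_le _ _
    _ ≤ m * k + 1 := by
        grw [Finset.card_image_le, Finset.card_product, Finset.card_range, Finset.card_range]

end PairSystem

section LowerBound

/-- An assignment giving the attributes `a_{2i}` and `a_{2i+1}` different values, the value of
`a_{2i}` recording whether `i ∈ B`. -/
def parityAssignment (B : Finset ℕ) (a : ℕ) : ℕ := if a / 2 ∈ B then a % 2 else 1 - a % 2

variable {B : Finset ℕ} {m k d : ℕ}

lemma parityAssignment_lt_two (a : ℕ) : parityAssignment B a < 2 := by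
  unfold parityAssignment
  split <;> omega

lemma parityAssignment_two_mul (i : ℕ) :
    parityAssignment B (2 * i) = if i ∈ B then 0 else 1 := by
  simp [parityAssignment]

lemma parityAssignment_two_mul_add_one (i : ℕ) :
    parityAssignment B (2 * i + 1) = if i ∈ B then 1 else 0 := by
  simp [parityAssignment, Nat.add_div]

lemma parityAssignment_ne (i : ℕ) :
    parityAssignment B (2 * i) ≠ parityAssignment B (2 * i + 1) := by
  rw [parityAssignment_two_mul, parityAssignment_two_mul_add_one]
  split <;> simp

lemma not_isRealizedBy_parityAssignment (hd : 2 ≤ d) {r : Rule} (hr : r ∈ pairSystem m k d) :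
    ¬ r.IsRealizedBy (parityAssignment B) := by
  intro hreal
  rcases mem_pairSystem.1 hr with rfl | ⟨i, -, δ, -, rfl⟩
  · have h0 := hreal (0, 0) (mem_zerosRule_K.2 ⟨by omega, rfl⟩)
    have h1 := hreal (1, 0) (mem_zerosRule_K.2 ⟨by omega, rfl⟩)
    exact parityAssignment_ne 0 (h0.trans h1.symm)
  · have h0 := hreal _ (mem_pairRule_K.2 (.inl rfl))
    have h1 := hreal _ (mem_pairRule_K.2 (.inr rfl))
    exact parityAssignment_ne i (h0.trans h1.symm)

lemma DGraph.SolvesSR.exists_completePath_parityAssignment {G : DGraph}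
    (hSR : G.SolvesSR (pairSystem m k d)) (hG : G.IsDG (pairSystem m k d) false) (hk : 2 ≤ k)
    (hd : 2 ≤ d) (hdm : d ≤ 2 * m) (B : Finset ℕ) :
    ∃ p t, G.IsCompletePath p t ∧ G.Follows (parityAssignment B) p ∧
      ∀ i < m, (2 * i, some (parityAssignment B (2 * i))) ∈ G.pathEqs p := by
  have hx : ∀ a ∈ attrs (pairSystem m k d), parityAssignment B a ∈ VS (pairSystem m k d) a := by
    intro a ha
    rw [attrs_pairSystem hdm (by omega), Finset.mem_range] at ha
    rw [VS_pairSystem hdm (by omega) ha, Finset.mem_range]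
    exact (parityAssignment_lt_two a).trans_le hk
  obtain ⟨p, t, hpt, hfol, hrefute⟩ := hSR.exists_completePath_refuting hG pairSystem_WF hx
    fun r hr => not_isRealizedBy_parityAssignment hd hr
  refine ⟨p, t, hpt, hfol, fun i hi => ?_⟩
  obtain ⟨q, hq, hne, hmem⟩ := hrefute _ (pairRule_mem_pairSystem hi
    ((parityAssignment_lt_two (2 * i + 1)).trans_le hk))
  rcases mem_pairRule_K.1 hq with rfl | rfl
  · exact hmem
  · exact absurd rfl hne

theorem two_pow_le_size_of_treeSolvesSR (hk : 2 ≤ k) (hd : 2 ≤ d) (hdm : d ≤ 2 * m)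
    {G : DGraph} (hG : TreeSolvesSR (pairSystem m k d) G) : 2 ^ m ≤ G.size := by
  obtain ⟨hDG, hTree, hSR⟩ := hG
  have hpath := hSR.exists_completePath_parityAssignment hDG hk hd hdm
  choose P T hPT hfol hmem using hpath
  have hinj : Set.InjOn T (Finset.range m).powerset := by
    intro B hB B' hB' hT
    have hP : P B = P B' := hTree.eq_of_chainFrom_root (fun e he => (hDG.2.1 e he).1)
      (hPT B).2.2 (hPT B).1 (hT ▸ (hPT B').1)
    ext i
    by_cases hi : i < m
    · have := (hfol B').snd_eq (hP ▸ hmem B i hi)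
      simp only [Option.some.injEq, parityAssignment_two_mul] at this
      split_ifs at this <;> simp_all
    · simp only [Finset.coe_powerset, Set.mem_preimage, Set.mem_powerset_iff, Finset.coe_subset]
        at hB hB'
      exact iff_of_false (fun h => hi (Finset.mem_range.1 (hB h)))
        (fun h => hi (Finset.mem_range.1 (hB' h)))
  calc 2 ^ m = (Finset.range m).powerset.card := by simp
    _ ≤ (Finset.range G.n).card :=
      Finset.card_le_card_of_injOn T (fun B _ => Finset.mem_range.2 (hPT B).2.2) hinj
    _ = G.size := Finset.card_range _

theorem two_pow_le_L_SR_pairSystem (hk : 2 ≤ k) (hd : 2 ≤ d) (hdm : d ≤ 2 * m) :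
    2 ^ m ≤ L_SR (pairSystem m k d) :=
  le_csInf ⟨_, _, treeSolvesSR_completeTree (by omega) (attrs_pairSystem hdm (by omega))
      (fun _ => VS_pairSystem hdm (by omega)), rfl⟩
    fun _ ⟨_, hG, hsize⟩ => hsize ▸ two_pow_le_size_of_treeSolvesSR hk hd hdm hG

end LowerBound

/-- For k ≥ 2 and d ≥ 2, there is no polynomial p with L_SR(S) ≤ p(|S|) for all reduced
systems S with k(S) = k and d(S) = d: for every polynomial p there is such an S with
L_SR(S) > p(|S|). -/
theorem statement_9 (k d : ℕ) (hk : 2 ≤ k) (hd : 2 ≤ d) (p : Polynomial ℕ) :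
    ∃ S : Finset Rule, S.Nonempty ∧ (∀ r ∈ S, r.WF) ∧ Reduced S ∧
      kPar S = k ∧ dPar S = d ∧ p.eval S.card < L_SR S := by
  set D := p.natDegree
  obtain ⟨m, hdm, hm⟩ := ((Filter.eventually_ge_atTop d).and
    (Nat.eventually_mul_pow_lt_two_pow (p.eval 1 * (k + 1) ^ D) D)).exists
  have hm0 : 0 < m := by omega
  have hdm' : d ≤ 2 * m := by omega
  refine ⟨pairSystem m k d, ⟨zerosRule d, mem_pairSystem.2 (.inl rfl)⟩, pairSystem_WF,
    reduced_pairSystem hdm' (by omega) hm0 hd, kPar_pairSystem hdm' (by omega) hm0,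
    dPar_pairSystem hd, ?_⟩
  calc p.eval (pairSystem m k d).card ≤ p.eval 1 * ((k + 1) * m) ^ D :=
        p.eval_le_eval_one_mul_pow (card_pairSystem_le.trans (by nlinarith)) (by positivity)
    _ = p.eval 1 * (k + 1) ^ D * m ^ D := by rw [mul_pow, mul_assoc]
    _ < 2 ^ m := hm
    _ ≤ L_SR (pairSystem m k d) := two_pow_le_L_SR_pairSystem hk hd hdm'

end DRS

end
end

section
/- Let S be a decision rule system and C ∈ {SR, ESR}. Then there exists an acyclic decision graph over S solving the problem C(S) with at most 1 + Σ_{r∈S}(length(r) + 1) nodes; in particular, L^DG_C(S) ≤ 1 + Σ_{r∈S}(length(r) + 1). -/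
/- Common formal framework for decision rule systems and decision trees /
   acyclic decision graphs, following Durdymyradov & Moshkov. -/

attribute [local instance] Classical.propDecidable

noncomputable section

namespace DRS

/-! List the rules of `S` as `r₁, …, r_k`. For each rule a chain of working nodes tests its
equations one after the other and ends in a terminal node labelled `{r}`; any answer that
deviates from the rule jumps to the first node of the chain of the next rule, and after the
last chain sits one terminal node labelled `∅`. A path reaching `{r}` has confirmed all of
`K(r)`, and a path reaching `∅` has contradicted every rule on the way. There are
`Σ (len r + 1) + 1` nodes, and every edge goes forward, so the graph is acyclic. -/

theorem mem_VS_of_mem_K {S : Finset Rule} {r : Rule} {q : ℕ × ℕ} (hr : r ∈ S)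
    (hq : q ∈ r.K) : q.2 ∈ VS S q.1 :=
  Finset.mem_image.2 ⟨q, Finset.mem_filter.2 ⟨Finset.mem_biUnion.2 ⟨r, hr, hq⟩, rfl⟩, rfl⟩

theorem mem_attrs_of_mem_VS {S : Finset Rule} {a δ : ℕ} (h : δ ∈ VS S a) : a ∈ attrs S := by
  obtain ⟨q, hq, -⟩ := Finset.mem_image.1 h
  obtain ⟨hqS, rfl⟩ := Finset.mem_filter.1 hq
  obtain ⟨r, hr, hqr⟩ := Finset.mem_biUnion.1 hqS
  exact Finset.mem_biUnion.2 ⟨r, hr, Finset.mem_image_of_mem _ hqr⟩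

theorem some_mem_allowed {S : Finset Rule} {a δ : ℕ} (ext : Bool) (h : δ ∈ VS S a) :
    some δ ∈ allowed S ext a :=
  Finset.mem_union_left _ (Finset.mem_image_of_mem _ h)

theorem ConsistentE.mono {E E' : Finset (ℕ × Option ℕ)} (h : E ⊆ E') (hE' : ConsistentE E') :
    ConsistentE E :=
  fun p hp q hq => hE' p (h hp) q (h hq)

theorem not_consistentE_liftK_union {K : Finset (ℕ × ℕ)} {E : Finset (ℕ × Option ℕ)}
    {q : ℕ × ℕ} {l : Option ℕ} (hq : q ∈ K) (hl : (q.1, l) ∈ E) (hne : l ≠ some q.2) :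
    ¬ ConsistentE (liftK K ∪ E) := fun hc =>
  hne (hc _ (Finset.mem_union_right _ hl) _
    (Finset.mem_union_left _ (Finset.mem_image_of_mem _ hq)) rfl)

/-- A working node `test a δ skip` asks for the value of `a`: the answer `δ` leads to the
next node, every other answer `skip` nodes ahead. -/
inductive Node
  | test (a δ skip : ℕ)
  | leaf (Z : Finset Rule)

namespace Node

def label : Node → ℕ ⊕ Finset Rule
  | test a _ _ => Sum.inl a
  | leaf Z => Sum.inr Z

def edgesAt (S : Finset Rule) (ext : Bool) (v : ℕ) : Node → Finset (ℕ × Option ℕ × ℕ)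
  | test a δ skip =>
      (allowed S ext a).image fun l => (v, l, if l = some δ then v + 1 else v + skip)
  | leaf _ => ∅

/-- `m` is the number of nodes that follow the node in the list. -/
def FitsBefore (S : Finset Rule) : Node → ℕ → Prop
  | test a δ skip, m => δ ∈ VS S a ∧ 0 < skip ∧ skip ≤ m
  | leaf Z, _ => Z ⊆ S

end Node

def WellFormed (S : Finset Rule) : List Node → Prop
  | [] => True
  | x :: xs => x.FitsBefore S xs.length ∧ WellFormed S xs

theorem WellFormed.fitsBefore {S : Finset Rule} :
    ∀ {ns : List Node} {v : ℕ} {x : Node}, WellFormed S ns → ns[v]? = some x →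
      x.FitsBefore S (ns.length - v - 1)
  | y :: ys, 0, x, h, hx => by
      obtain rfl : y = x := by simpa using hx
      simpa using h.1
  | _ :: ys, v + 1, x, h, hx => by
      have := WellFormed.fitsBefore h.2 (by simpa using hx)
      simpa [Nat.sub_sub, Nat.add_comm 1 v] using this

def linearGraph (S : Finset Rule) (ext : Bool) (ns : List Node) : DGraph where
  n := ns.length
  root := 0
  label v := (ns.getD v (.leaf ∅)).label
  edges := (Finset.range ns.length).biUnion fun v => (ns.getD v (.leaf ∅)).edgesAt S ext v

section linearGraph

variable {S : Finset Rule} {ext : Bool} {ns : List Node}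

theorem linearGraph_label {v : ℕ} {x : Node} (h : ns[v]? = some x) :
    (linearGraph S ext ns).label v = x.label := by
  simp [linearGraph, List.getD_eq_getElem?_getD, h]

theorem linearGraph_termSet_of_leaf {v : ℕ} {Z : Finset Rule} (h : ns[v]? = some (.leaf Z)) :
    (linearGraph S ext ns).termSet v = Z := by
  simp [DGraph.termSet, linearGraph_label h, Node.label]

theorem mem_linearGraph_edges {u w : ℕ} {l : Option ℕ} :
    (u, l, w) ∈ (linearGraph S ext ns).edges ↔ ∃ a δ skip, ns[u]? = some (.test a δ skip) ∧
      l ∈ allowed S ext a ∧ w = if l = some δ then u + 1 else u + skip := by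
  simp only [linearGraph, Finset.mem_biUnion, Finset.mem_range]
  constructor
  · rintro ⟨v, hv, he⟩
    rw [List.getD_eq_getElem?_getD, List.getElem?_eq_getElem hv] at he
    cases hx : ns[v] with
    | leaf Z => simp [hx, Node.edgesAt] at he
    | test a δ skip =>
        obtain ⟨l', hl', h'⟩ := Finset.mem_image.1 (hx ▸ he)
        simp only [Prod.mk.injEq] at h'
        obtain ⟨rfl, rfl, rfl⟩ := h'
        exact ⟨a, δ, skip, List.getElem?_eq_some_iff.2 ⟨hv, hx⟩, hl', rfl⟩
  · rintro ⟨a, δ, skip, hx, hl, rfl⟩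
    obtain ⟨hu, hx'⟩ := List.getElem?_eq_some_iff.1 hx
    refine ⟨u, hu, ?_⟩
    rw [List.getD_eq_getElem?_getD, hx]
    exact Finset.mem_image.2 ⟨l, hl, rfl⟩

theorem linearGraph_isTerminal_of_leaf {v : ℕ} {Z : Finset Rule} (h : ns[v]? = some (.leaf Z)) :
    (linearGraph S ext ns).IsTerminal v := by
  rintro ⟨u, l, w⟩ he rfl
  obtain ⟨a, δ, skip, hx, -⟩ := mem_linearGraph_edges.1 he
  simp [h] at hx

theorem linearGraph_not_isTerminal_of_test {v a δ skip : ℕ} (hδ : δ ∈ VS S a)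
    (h : ns[v]? = some (.test a δ skip)) : ¬ (linearGraph S ext ns).IsTerminal v := fun ht =>
  ht _ (mem_linearGraph_edges.2 ⟨a, δ, skip, h, some_mem_allowed ext hδ, rfl⟩) rfl

theorem linearGraph_chainFrom_of_leaf {v t : ℕ} {Z : Finset Rule} {p : List (ℕ × Option ℕ)}
    (h : ns[v]? = some (.leaf Z)) (hp : (linearGraph S ext ns).chainFrom v p t) :
    p = [] ∧ t = v := by
  cases p with
  | nil => exact ⟨rfl, hp.symm⟩
  | cons x p =>
      obtain ⟨-, w, hw, -⟩ := hp
      obtain ⟨a, δ, skip, hx, -⟩ := mem_linearGraph_edges.1 hw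
      simp [h] at hx

theorem linearGraph_chainFrom_cons_of_test {v t a δ skip : ℕ} {x : ℕ × Option ℕ}
    {p : List (ℕ × Option ℕ)} (h : ns[v]? = some (.test a δ skip))
    (hp : (linearGraph S ext ns).chainFrom v (x :: p) t) :
    (linearGraph S ext ns).chainFrom (if x.2 = some δ then v + 1 else v + skip) p t ∧
      (linearGraph S ext ns).pathEqs (x :: p) =
        insert (a, x.2) ((linearGraph S ext ns).pathEqs p) := by
  obtain ⟨hxv, w, hw, hp⟩ := hp
  obtain ⟨a', δ', skip', h', -, rfl⟩ := mem_linearGraph_edges.1 hw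
  obtain ⟨rfl, rfl, rfl⟩ : a = a' ∧ δ = δ' ∧ skip = skip' := by simpa [h] using h'
  refine ⟨hp, ?_⟩
  simp [DGraph.pathEqs, linearGraph_label (hxv ▸ h), Node.label]

theorem isDG_linearGraph (hwf : WellFormed S ns) (hne : ns ≠ []) :
    (linearGraph S ext ns).IsDG S ext := by
  have hfits {v a δ skip} (h : ns[v]? = some (.test a δ skip)) :
      δ ∈ VS S a ∧ 0 < skip ∧ v + skip < ns.length := by
    have hv := (List.getElem?_eq_some_iff.1 h).1
    obtain ⟨hδ, hpos, hle⟩ := hwf.fitsBefore h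
    exact ⟨hδ, hpos, by omega⟩
  have hforward {u l w} (he : (u, l, w) ∈ (linearGraph S ext ns).edges) :
      u < w ∧ w < ns.length := by
    obtain ⟨a, δ, skip, hx, -, rfl⟩ := mem_linearGraph_edges.1 he
    obtain ⟨-, hpos, hlt⟩ := hfits hx
    split <;> omega
  refine ⟨List.length_pos_iff.2 hne, fun ⟨u, l, w⟩ he => ?_, fun v hv => ?_, fun v hv => ?_⟩
  · exact ⟨(hforward he).1.trans (hforward he).2, (hforward he).2⟩
  · exact lt_irrefl v (Relation.transGen_minimal (r' := (· < ·))
      (fun u w ⟨l, he⟩ => (hforward he).1) v v hv)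
  · cases hx : ns[v] with
    | leaf Z =>
        have hx' : ns[v]? = some (.leaf Z) := List.getElem?_eq_some_iff.2 ⟨hv, hx⟩
        rw [if_pos (linearGraph_isTerminal_of_leaf hx')]
        exact ⟨Z, linearGraph_label hx', hwf.fitsBefore hx'⟩
    | test a δ skip =>
        have hx' : ns[v]? = some (.test a δ skip) := List.getElem?_eq_some_iff.2 ⟨hv, hx⟩
        rw [if_neg (linearGraph_not_isTerminal_of_test (hfits hx').1 hx')]
        refine ⟨a, linearGraph_label hx', mem_attrs_of_mem_VS (hfits hx').1, fun l => ?_,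
          fun l w w' h h' => ?_⟩
        · constructor
          · rintro ⟨w, hw⟩
            obtain ⟨a', δ', skip', h', hl, -⟩ := mem_linearGraph_edges.1 hw
            obtain rfl : a = a' := by simp_all
            exact hl
          · intro hl
            exact ⟨_, mem_linearGraph_edges.2 ⟨a, δ, skip, hx', hl, rfl⟩⟩
        · obtain ⟨a₁, δ₁, skip₁, h₁, -, rfl⟩ := mem_linearGraph_edges.1 h
          obtain ⟨a₂, δ₂, skip₂, h₂, -, rfl⟩ := mem_linearGraph_edges.1 h'
          obtain ⟨-, rfl, rfl⟩ : a₁ = a₂ ∧ δ₁ = δ₂ ∧ skip₁ = skip₂ := by simp_all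
          rfl

end linearGraph

/-- A failed test jumps just past the final leaf. -/
def testChain : List (ℕ × ℕ) → Finset Rule → List Node
  | [], Z => [.leaf Z]
  | q :: qs, Z => .test q.1 q.2 (qs.length + 2) :: testChain qs Z

def ruleNodes : List Rule → List Node
  | [] => [.leaf ∅]
  | r :: rs => testChain r.K.toList {r} ++ ruleNodes rs

@[simp]
theorem length_testChain (qs : List (ℕ × ℕ)) (Z : Finset Rule) :
    (testChain qs Z).length = qs.length + 1 := by
  induction qs <;> simp_all [testChain]

theorem length_ruleNodes (rs : List Rule) :
    (ruleNodes rs).length = (rs.map fun r => r.len + 1).sum + 1 := by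
  induction rs with
  | nil => rfl
  | cons r rs ih => simp [ruleNodes, ih, Rule.len]; omega

theorem wellFormed_testChain_append {S : Finset Rule} {Z : Finset Rule} {ys : List Node}
    (hZ : Z ⊆ S) (hys : WellFormed S ys) (hne : ys ≠ []) :
    ∀ {qs : List (ℕ × ℕ)}, (∀ q ∈ qs, q.2 ∈ VS S q.1) → WellFormed S (testChain qs Z ++ ys)
  | [], _ => ⟨hZ, hys⟩
  | q :: qs, hqs => by
      have := List.length_pos_iff.2 hne
      refine ⟨⟨hqs q List.mem_cons_self, by omega, by simp; omega⟩, ?_⟩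
      exact wellFormed_testChain_append hZ hys hne fun q' hq' => hqs q' (List.mem_cons_of_mem q hq')

theorem wellFormed_ruleNodes {S : Finset Rule} :
    ∀ {rs : List Rule}, (∀ r ∈ rs, r ∈ S) → WellFormed S (ruleNodes rs)
  | [], _ => ⟨Finset.empty_subset S, trivial⟩
  | r :: rs, hrs => by
      have hr := hrs r List.mem_cons_self
      refine wellFormed_testChain_append (Finset.singleton_subset_iff.2 hr)
        (wellFormed_ruleNodes fun r' hr' => hrs r' (List.mem_cons_of_mem r hr')) ?_ ?_
      · exact List.ne_nil_of_length_pos (by rw [length_ruleNodes]; omega)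
      · exact fun q hq => mem_VS_of_mem_K hr (Finset.mem_toList.1 hq)

section ruleNodes

variable {S : Finset Rule} {ext : Bool} {ns : List Node}

theorem linearGraph_chainFrom_testChain {Z : Finset Rule} {post : List Node} {t : ℕ} :
    ∀ {qs : List (ℕ × ℕ)} {pre : List Node} {p : List (ℕ × Option ℕ)},
      (∀ q ∈ qs, q.2 ∈ VS S q.1) → ns = pre ++ testChain qs Z ++ post →
      (linearGraph S ext ns).chainFrom pre.length p t → (linearGraph S ext ns).IsTerminal t →
      ((linearGraph S ext ns).termSet t = Z ∧
          ∀ q ∈ qs, (q.1, some q.2) ∈ (linearGraph S ext ns).pathEqs p) ∨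
        ((∃ q ∈ qs, ∃ l, (q.1, l) ∈ (linearGraph S ext ns).pathEqs p ∧ l ≠ some q.2) ∧
          ∃ p', (linearGraph S ext ns).chainFrom (pre.length + qs.length + 1) p' t ∧
            (linearGraph S ext ns).pathEqs p' ⊆ (linearGraph S ext ns).pathEqs p)
  | [], pre, p, _, hns, hp, _ => by
      have hleaf : ns[pre.length]? = some (.leaf Z) := by simp [hns, testChain]
      obtain ⟨rfl, rfl⟩ := linearGraph_chainFrom_of_leaf hleaf hp
      exact Or.inl ⟨linearGraph_termSet_of_leaf hleaf, by simp⟩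
  | q :: qs, pre, p, hqs, hns, hp, ht => by
      have htest : ns[pre.length]? = some (.test q.1 q.2 (qs.length + 2)) := by
        simp [hns, testChain]
      obtain _ | ⟨x, p⟩ := p
      · exact absurd (hp ▸ ht)
          (linearGraph_not_isTerminal_of_test (hqs q List.mem_cons_self) htest)
      obtain ⟨hp, hEq⟩ := linearGraph_chainFrom_cons_of_test htest hp
      rw [hEq]
      by_cases hx : x.2 = some q.2
      · rw [if_pos hx] at hp
        have hns' : ns = (pre ++ [.test q.1 q.2 (qs.length + 2)]) ++ testChain qs Z ++ post := by
          simp [hns, testChain]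
        rcases linearGraph_chainFrom_testChain
            (fun q' hq' => hqs q' (List.mem_cons_of_mem q hq')) hns'
            (by simpa using hp) ht with ⟨hts, hall⟩ | ⟨⟨q', hq', l, hl, hne⟩, p', hp', hsub⟩
        · refine Or.inl ⟨hts, fun q' hq' => ?_⟩
          rcases List.mem_cons.1 hq' with rfl | hq'
          · exact hx ▸ Finset.mem_insert_self _ _
          · exact Finset.mem_insert_of_mem (hall q' hq')
        · refine Or.inr ⟨⟨q', List.mem_cons_of_mem q hq', l, Finset.mem_insert_of_mem hl, hne⟩,
            p', ?_, hsub.trans (Finset.subset_insert _ _)⟩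
          simpa [Nat.add_assoc, Nat.add_comm 1] using hp'
      · rw [if_neg hx] at hp
        refine Or.inr ⟨⟨q, List.mem_cons_self, x.2, Finset.mem_insert_self _ _, hx⟩, p, ?_,
          Finset.subset_insert _ _⟩
        simpa [Nat.add_assoc] using hp

theorem linearGraph_chainFrom_ruleNodes {t : ℕ} :
    ∀ {rs : List Rule} {pre : List Node} {p : List (ℕ × Option ℕ)},
      (∀ r ∈ rs, r ∈ S) → ns = pre ++ ruleNodes rs →
      (linearGraph S ext ns).chainFrom pre.length p t → (linearGraph S ext ns).IsTerminal t →
      (∃ r ∈ rs, (linearGraph S ext ns).termSet t = {r} ∧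
          liftK r.K ⊆ (linearGraph S ext ns).pathEqs p) ∨
        ((linearGraph S ext ns).termSet t = ∅ ∧
          ∀ r ∈ rs, ¬ ConsistentE (liftK r.K ∪ (linearGraph S ext ns).pathEqs p))
  | [], pre, p, _, hns, hp, _ => by
      have hleaf : ns[pre.length]? = some (.leaf ∅) := by simp [hns, ruleNodes]
      obtain ⟨rfl, rfl⟩ := linearGraph_chainFrom_of_leaf hleaf hp
      exact Or.inr ⟨linearGraph_termSet_of_leaf hleaf, by simp⟩
  | r :: rs, pre, p, hrs, hns, hp, ht => by
      have hr := hrs r List.mem_cons_self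
      have hns' : ns = pre ++ testChain r.K.toList {r} ++ ruleNodes rs := by
        simp [hns, ruleNodes]
      rcases linearGraph_chainFrom_testChain
          (fun q hq => mem_VS_of_mem_K hr (Finset.mem_toList.1 hq)) hns' hp ht with
        ⟨hts, hall⟩ | ⟨⟨q, hq, l, hl, hne⟩, p', hp', hsub⟩
      · refine Or.inl ⟨r, List.mem_cons_self, hts, fun e he => ?_⟩
        obtain ⟨q, hq, rfl⟩ := Finset.mem_image.1 he
        exact hall q (Finset.mem_toList.2 hq)
      · have hns'' : ns = (pre ++ testChain r.K.toList {r}) ++ ruleNodes rs := by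
          simp [hns']
        rcases linearGraph_chainFrom_ruleNodes (fun r' hr' => hrs r' (List.mem_cons_of_mem r hr'))
            hns'' (by simpa [Nat.add_assoc] using hp') ht with
          ⟨r', hr', hts, hK⟩ | ⟨hts, hall⟩
        · exact Or.inl ⟨r', List.mem_cons_of_mem r hr', hts, hK.trans hsub⟩
        · refine Or.inr ⟨hts, ?_⟩
          intro r' hr'
          rcases List.mem_cons.1 hr' with rfl | hr'
          · exact not_consistentE_liftK_union (Finset.mem_toList.1 hq) hl hne
          · exact fun hc => hall r' hr' (hc.mono (Finset.union_subset_union_right hsub))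

end ruleNodes

theorem solvesSR_linearGraph_ruleNodes (S : Finset Rule) (ext : Bool) :
    (linearGraph S ext (ruleNodes S.toList)).SolvesSR S := by
  rintro p t ⟨hp, ht, -⟩ -
  rcases linearGraph_chainFrom_ruleNodes (ns := ruleNodes S.toList) (pre := []) (fun r hr => Finset.mem_toList.1 hr) rfl
      hp ht with ⟨r, -, hts, hK⟩ | ⟨hts, hall⟩
  · rw [hts]
    exact ⟨by simpa using hK, fun h => absurd h (Finset.singleton_ne_empty r)⟩
  · rw [hts]
    exact ⟨by simp, fun _ r hr => hall r (Finset.mem_toList.2 hr)⟩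

theorem exists_isDG_solvesSR_size_le (S : Finset Rule) (ext : Bool) :
    ∃ G : DGraph, G.IsDG S ext ∧ G.SolvesSR S ∧ G.size ≤ 1 + ∑ r ∈ S, (r.len + 1) := by
  have hlen : (ruleNodes S.toList).length = ∑ r ∈ S, (r.len + 1) + 1 := by
    rw [length_ruleNodes, Finset.sum_map_toList]
  refine ⟨_, isDG_linearGraph (wellFormed_ruleNodes fun r hr => Finset.mem_toList.1 hr) ?_,
    solvesSR_linearGraph_ruleNodes S ext, ?_⟩
  · rw [← List.length_pos_iff, hlen]; omega
  · show (ruleNodes S.toList).length ≤ _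
    omega

theorem statement_10_general (S : Finset Rule) :
    (∃ G : DGraph, G.IsDG S false ∧ G.SolvesSR S ∧
      G.size ≤ 1 + ∑ r ∈ S, (r.len + 1)) ∧
    (∃ G : DGraph, G.IsDG S true ∧ G.SolvesSR S ∧
      G.size ≤ 1 + ∑ r ∈ S, (r.len + 1)) ∧
    LDG_SR S ≤ 1 + ∑ r ∈ S, (r.len + 1) ∧
    LDG_ESR S ≤ 1 + ∑ r ∈ S, (r.len + 1) := by
  obtain ⟨G₀, hG₀, hsolves₀, hsize₀⟩ := exists_isDG_solvesSR_size_le S false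
  obtain ⟨G₁, hG₁, hsolves₁, hsize₁⟩ := exists_isDG_solvesSR_size_le S true
  have hL₀ : LDG_SR S ≤ G₀.size := Nat.sInf_le ⟨G₀, hG₀, hsolves₀, rfl⟩
  have hL₁ : LDG_ESR S ≤ G₁.size := Nat.sInf_le ⟨G₁, hG₁, hsolves₁, rfl⟩
  exact ⟨⟨G₀, hG₀, hsolves₀, hsize₀⟩, ⟨G₁, hG₁, hsolves₁, hsize₁⟩, hL₀.trans hsize₀,
    hL₁.trans hsize₁⟩

/-- Theorem 2(a) (construction): for C ∈ {SR, ESR} there is an acyclic decision graph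
over S solving C(S) with at most 1 + Σ_{r∈S}(length(r) + 1) nodes; in particular
L^DG_C(S) ≤ 1 + Σ_{r∈S}(length(r) + 1). -/
theorem statement_10 (S : Finset Rule) (hS : S.Nonempty) (hwf : ∀ r ∈ S, r.WF) :
    (∃ G : DGraph, G.IsDG S false ∧ G.SolvesSR S ∧
      G.size ≤ 1 + ∑ r ∈ S, (r.len + 1)) ∧
    (∃ G : DGraph, G.IsDG S true ∧ G.SolvesSR S ∧
      G.size ≤ 1 + ∑ r ∈ S, (r.len + 1)) ∧
    LDG_SR S ≤ 1 + ∑ r ∈ S, (r.len + 1) ∧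
    LDG_ESR S ≤ 1 + ∑ r ∈ S, (r.len + 1) :=
  statement_10_general S

end DRS

end
end
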